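/- For every integer r ≥ 2, the identity S_{4,b} + S_{3,b} = (H²/(q)_1) · Σ_{ℓ≥0} q^{r+ℓ} (q)_{r+ℓ−1} G_{r,ℓ} holds in the ring of formal power series (the sum being well defined since the ℓ-th term is divisible by q^{r+ℓ}). -/

import Mathlib

open PowerSeries Finset

/-- `l` is (the list of parts, in non-increasing order, of) an integer partition. -/
def IsPtn (l : List ℕ) : Prop := l.Pairwise (· ≥ ·) ∧ ∀ x ∈ l, 0 < x

/-- Gordon's difference condition: `λ_j − λ_{j+r−1} ≥ 2` whenever both parts exist. -/
def GordonCond (r : ℕ) (l : List ℕ) : Prop :=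
  ∀ j : ℕ, j + (r - 1) < l.length → l.getD (j + (r - 1)) 0 + 2 ≤ l.getD j 0

/-- membership in `B_{r,i}`: Gordon's difference condition and at most `i−1` parts equal to 1. -/
def MemB (r i : ℕ) (l : List ℕ) : Prop := IsPtn l ∧ GordonCond r l ∧ l.count 1 ≤ i - 1

/-- the smallest part of a partition (listed in non-increasing order). -/
def Kpart (l : List ℕ) : ℕ := l.getD (l.length - 1) 0

/-- the `k`-th smallest part of a partition (listed in non-increasing order). -/
def Ikpart (l : List ℕ) (k : ℕ) : ℕ := l.getD (l.length - k) 0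

/-- `H`, the generating series of the partition function. -/
noncomputable def Hq : PowerSeries ℚ :=
  PowerSeries.mk fun n => (Set.ncard {l : List ℕ | IsPtn l ∧ l.sum = n} : ℚ)

/-- `(q)_n = (1−q)(1−q²)⋯(1−qⁿ)`, with `(q)_0 = 1`. -/
noncomputable def qPoch (n : ℕ) : PowerSeries ℚ :=
  ∏ j ∈ Finset.range n, (1 - (X : PowerSeries ℚ) ^ (j + 1))

/-- the sum `Σ_{k ≥ 0} f k` of a family of formal power series in which the `k`-th term
has order at least `k` (so that the sum is well defined coefficientwise). -/
noncomputable def seriesSum (f : ℕ → PowerSeries ℚ) : PowerSeries ℚ :=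
  PowerSeries.mk fun n => ∑ k ∈ Finset.range (n + 1), PowerSeries.coeff n (f k)

/-- `G_{r,ℓ}(n)`: the number of partitions in `B_{r,r}(n)` with at most `ℓ` parts
different from 1. -/
noncomputable def Gcount (r ℓ n : ℕ) : ℕ :=
  Set.ncard {l : List ℕ | MemB r r l ∧ l.sum = n ∧ l.length - l.count 1 ≤ ℓ}

/-- generating series counting 3-colored partitions (triples of partitions) satisfying `P`,
by total size. -/
noncomputable def cseries (P : List ℕ → List ℕ → List ℕ → Prop) : PowerSeries ℚ :=
  PowerSeries.mk fun n =>
    (Set.ncard {t : List ℕ × List ℕ × List ℕ |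
        P t.1 t.2.1 t.2.2 ∧ t.1.sum + t.2.1.sum + t.2.2.sum = n} : ℚ)

/-- type 3.b: black and red parts non-empty, no green parts, `ℓ_r ≥ k` and `k + i_k ≥ r`. -/
def Type3b (r : ℕ) (b rd g : List ℕ) : Prop :=
  IsPtn b ∧ IsPtn rd ∧ IsPtn g ∧ b ≠ [] ∧ rd ≠ [] ∧ g = [] ∧
    Kpart b ≤ rd.length ∧ r ≤ Kpart b + Ikpart rd (Kpart b)

/-- type 4.b: all three colors non-empty, `λ_g ∈ B_{r,r}`, `ℓ_r ≥ k`, `k + i_k ≥ r` and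
`ℓ_g − #{1_g} < k + i_k − r + 1`. -/
def Type4b (r : ℕ) (b rd g : List ℕ) : Prop :=
  IsPtn b ∧ IsPtn rd ∧ IsPtn g ∧ b ≠ [] ∧ rd ≠ [] ∧ g ≠ [] ∧ MemB r r g ∧
    Kpart b ≤ rd.length ∧ r ≤ Kpart b + Ikpart rd (Kpart b) ∧
    g.length - g.count 1 < Kpart b + Ikpart rd (Kpart b) - r + 1

/-!
Split a triple of type 3.b or 4.b according to `j = k + i_k = r + ℓ`: its green partition then
ranges exactly over the partitions counted by `G_{r,ℓ}` (the empty one giving type 3.b), so the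
series is `Σ_ℓ P_{r+ℓ} G_{r,ℓ}` with `P_j` counting the black–red pairs with `k + i_k = j`.
A black partition with smallest part `k` is `k` appended to a partition with parts `≥ k`, counted
by `q^k (q)_{k-1} H`. A red partition whose `k`-th smallest part is `i` is a partition with parts
`≥ i`, then the part `i`, then `k - 1` parts in `[1, i]`; subtracting one from those parts gives a
partition in a `(k-1) × (i-1)` box, counted by a Gaussian binomial, so the red side contributes
`q^i (q)_{i-1} H · q^{k-1} (q)_{k+i-2} / ((q)_{k-1} (q)_{i-1})`. The Pochhammer symbols cancel:
a pair with `k + i = j` contributes `q^j q^{k-1} H² (q)_{j-2}`, and summing the geometric series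
over `k` gives `P_j = q^j H² (q)_{j-1} / (1 - q)`.
-/

open scoped Function

section SizeSeries

variable {α β ι : Type*}

noncomputable def sizeSeries (size : α → ℕ) (A : Set α) : PowerSeries ℚ :=
  PowerSeries.mk fun n => ({x ∈ A | size x = n}.ncard : ℚ)

def FiniteSlices (size : α → ℕ) (A : Set α) : Prop :=
  ∀ n, {x ∈ A | size x = n}.Finite

variable {size : α → ℕ} {A B : Set α}

lemma FiniteSlices.subset (hB : FiniteSlices size B) (hAB : A ⊆ B) : FiniteSlices size A :=
  fun n => (hB n).subset fun _ hx => ⟨hAB hx.1, hx.2⟩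

lemma coeff_sizeSeries (n : ℕ) :
    coeff n (sizeSeries size A) = ({x ∈ A | size x = n}.ncard : ℚ) :=
  coeff_mk _ _

lemma sep_prod_eq_biUnion (sa : α → ℕ) (sb : β → ℕ) (A : Set α) (B : Set β) (n : ℕ) :
    {p ∈ A ×ˢ B | sa p.1 + sb p.2 = n} =
      ⋃ ij ∈ antidiagonal n, {x ∈ A | sa x = ij.1} ×ˢ {y ∈ B | sb y = ij.2} := by
  ext p
  simp only [Set.mem_ofPred_eq, Set.mem_iUnion, Set.mem_prod, HasAntidiagonal.mem_antidiagonal]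
  constructor
  · rintro ⟨⟨h1, h2⟩, h3⟩
    exact ⟨(sa p.1, sb p.2), h3, ⟨h1, rfl⟩, h2, rfl⟩
  · rintro ⟨ij, hij, ⟨h1, e1⟩, h2, e2⟩
    exact ⟨⟨h1, h2⟩, e1 ▸ e2 ▸ hij⟩

lemma FiniteSlices.prod {sa : α → ℕ} {sb : β → ℕ} {A : Set α} {B : Set β}
    (hA : FiniteSlices sa A) (hB : FiniteSlices sb B) :
    FiniteSlices (fun p : α × β => sa p.1 + sb p.2) (A ×ˢ B) := fun n => by
  rw [sep_prod_eq_biUnion]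
  exact (antidiagonal n).finite_toSet.biUnion fun ij _ => (hA ij.1).prod (hB ij.2)

lemma ncard_biUnion_finset {F : Finset ι} {A : ι → Set α} (hfin : ∀ i ∈ F, (A i).Finite)
    (hd : (F : Set ι).PairwiseDisjoint A) :
    (⋃ i ∈ F, A i).ncard = ∑ i ∈ F, (A i).ncard := by
  rw [← finsum_mem_coe_finset]
  exact F.finite_toSet.ncard_biUnion hfin hd

lemma sizeSeries_union (hd : Disjoint A B) (hA : FiniteSlices size A)
    (hB : FiniteSlices size B) :
    sizeSeries size (A ∪ B) = sizeSeries size A + sizeSeries size B := by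
  ext n
  have hslice : {x ∈ A ∪ B | size x = n} = {x ∈ A | size x = n} ∪ {x ∈ B | size x = n} :=
    Set.sep_union
  rw [map_add, coeff_sizeSeries, coeff_sizeSeries, coeff_sizeSeries, hslice,
    Set.ncard_union_eq (hd.mono (Set.sep_subset _ _) (Set.sep_subset _ _)) (hA n) (hB n)]
  push_cast
  rfl

lemma sizeSeries_biUnion {F : Finset ι} {A : ι → Set α}
    (hfin : ∀ i ∈ F, FiniteSlices size (A i)) (hd : (F : Set ι).PairwiseDisjoint A) :
    sizeSeries size (⋃ i ∈ F, A i) = ∑ i ∈ F, sizeSeries size (A i) := by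
  ext n
  have hslice : {x ∈ ⋃ i ∈ F, A i | size x = n} = ⋃ i ∈ F, {x ∈ A i | size x = n} := by
    ext x
    simp only [Set.mem_ofPred_eq, Set.mem_iUnion]
    tauto
  rw [map_sum, coeff_sizeSeries, hslice, ncard_biUnion_finset (fun i hi => hfin i hi n)
    (hd.mono fun i => Set.sep_subset _ _)]
  simp only [coeff_sizeSeries, Nat.cast_sum]

/-- Only the pieces `A ℓ` with `ℓ ≤ n` meet the slice of size `n`, so the sum is locally finite. -/
lemma sizeSeries_iUnion {A : ℕ → Set α} (hfin : ∀ ℓ, FiniteSlices size (A ℓ))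
    (hd : Pairwise (Disjoint on A)) (hsize : ∀ ℓ, ∀ x ∈ A ℓ, ℓ ≤ size x) :
    sizeSeries size (⋃ ℓ, A ℓ) = seriesSum fun ℓ => sizeSeries size (A ℓ) := by
  ext n
  have hslice : {x ∈ ⋃ ℓ, A ℓ | size x = n} = {x ∈ ⋃ ℓ ∈ range (n + 1), A ℓ | size x = n} := by
    ext x
    simp only [Set.mem_ofPred_eq, Set.mem_iUnion, mem_range, exists_prop]
    constructor
    · rintro ⟨⟨ℓ, hx⟩, rfl⟩
      exact ⟨⟨ℓ, Nat.lt_succ_of_le (hsize ℓ x hx), hx⟩, rfl⟩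
    · rintro ⟨⟨ℓ, -, hx⟩, rfl⟩
      exact ⟨⟨ℓ, hx⟩, rfl⟩
  rw [seriesSum, coeff_mk, ← map_sum, ← sizeSeries_biUnion (fun ℓ _ => hfin ℓ)
    (fun i _ j _ hij => hd hij), coeff_sizeSeries, coeff_sizeSeries, hslice]

lemma sizeSeries_prod {sa : α → ℕ} {sb : β → ℕ} {A : Set α} {B : Set β}
    (hA : FiniteSlices sa A) (hB : FiniteSlices sb B) :
    sizeSeries (fun p : α × β => sa p.1 + sb p.2) (A ×ˢ B) = sizeSeries sa A * sizeSeries sb B := by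
  ext n
  rw [coeff_mul, coeff_sizeSeries, sep_prod_eq_biUnion,
    ncard_biUnion_finset (fun ij _ => (hA ij.1).prod (hB ij.2))]
  · push_cast
    refine sum_congr rfl fun ij _ => ?_
    rw [Set.ncard_prod, coeff_sizeSeries, coeff_sizeSeries]
    push_cast
    rfl
  · rintro ij - kl - hne
    refine Set.disjoint_left.2 fun p ⟨⟨_, e1⟩, _, e2⟩ ⟨⟨_, e3⟩, _, e4⟩ => hne ?_
    exact Prod.ext (e1 ▸ e3) (e2 ▸ e4)

lemma sizeSeries_eq_X_pow_mul_of_bijOn {sa : α → ℕ} {sb : β → ℕ} {A : Set α} {B : Set β}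
    (t : ℕ) (f : α → β) (hf : Set.BijOn f A B) (hsize : ∀ x ∈ A, sb (f x) = sa x + t) :
    sizeSeries sb B = X ^ t * sizeSeries sa A := by
  ext n
  rw [coeff_sizeSeries, coeff_X_pow_mul']
  split_ifs with hn
  · have himage : f '' {x ∈ A | sa x = n - t} = {y ∈ B | sb y = n} := by
      rw [← hf.image_eq]
      ext y
      simp only [Set.mem_image, Set.mem_ofPred_eq]
      constructor
      · rintro ⟨x, ⟨hx, hsx⟩, rfl⟩
        exact ⟨⟨x, hx, rfl⟩, by rw [hsize x hx]; omega⟩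
      · rintro ⟨⟨x, hx, rfl⟩, hy⟩
        exact ⟨x, ⟨hx, by rw [hsize x hx] at hy; omega⟩, rfl⟩
    rw [coeff_sizeSeries, ← himage, (hf.injOn.mono (Set.sep_subset _ _)).ncard_image]
  · have hempty : {y ∈ B | sb y = n} = ∅ := by
      refine Set.eq_empty_of_forall_notMem ?_
      rintro y ⟨hy, rfl⟩
      obtain ⟨x, hx, rfl⟩ := hf.surjOn hy
      rw [hsize x hx] at hn
      omega
    simp [hempty]

lemma sizeSeries_singleton (a : α) : sizeSeries size {a} = X ^ size a := by
  ext n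
  rw [coeff_sizeSeries, coeff_X_pow]
  split_ifs with hn
  · rw [show {x ∈ ({a} : Set α) | size x = n} = {a} by ext; aesop]
    simp
  · rw [show {x ∈ ({a} : Set α) | size x = n} = ∅ by ext; aesop]
    simp

end SizeSeries

lemma mul_seriesSum (A : PowerSeries ℚ) {f : ℕ → PowerSeries ℚ} (hf : ∀ k, X ^ k ∣ f k) :
    A * seriesSum f = seriesSum fun k => A * f k := by
  have hvanish : ∀ k m, m < k → coeff m (f k) = 0 := fun k => X_pow_dvd_iff.1 (hf k)
  ext n
  simp only [seriesSum, coeff_mul, coeff_mk, mul_sum]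
  rw [sum_comm]
  refine sum_congr rfl fun p hp => ?_
  have hp2 : p.2 < n + 1 := by have := mem_antidiagonal.1 hp; omega
  exact sum_subset (range_subset_range.2 hp2) fun k _ hk =>
    by rw [hvanish k p.2 (by simpa using hk), mul_zero]

section Partitions

variable {l l₁ l₂ : List ℕ}

lemma finiteSlices_isPtn : FiniteSlices List.sum {l : List ℕ | IsPtn l} := fun n => by
  rw [← Set.finite_coe_iff]
  let toPartition : {l | l ∈ {l : List ℕ | IsPtn l} ∧ l.sum = n} → Nat.Partition n :=
    fun l => ⟨(l.1 : Multiset ℕ), fun hi => l.2.1.2 _ hi, by simpa using l.2.2⟩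
  refine Finite.of_injective toPartition fun l₁ l₂ h => Subtype.ext ?_
  simp only [toPartition, Nat.Partition.mk.injEq, Multiset.coe_eq_coe] at h
  exact h.eq_of_pairwise' l₁.2.1.1 l₂.2.1.1

lemma finiteSlices_of_isPtn {A : Set (List ℕ)} (h : ∀ l ∈ A, IsPtn l) :
    FiniteSlices List.sum A :=
  finiteSlices_isPtn.subset h

lemma isPtn_nil : IsPtn [] := ⟨List.Pairwise.nil, by simp⟩

lemma IsPtn.sublist (hl : IsPtn l₂) (h : l₁.Sublist l₂) : IsPtn l₁ :=
  ⟨hl.1.sublist h, fun x hx => hl.2 x (h.subset hx)⟩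

lemma isPtn_append :
    IsPtn (l₁ ++ l₂) ↔ IsPtn l₁ ∧ IsPtn l₂ ∧ ∀ a ∈ l₁, ∀ b ∈ l₂, b ≤ a := by
  simp only [IsPtn, List.pairwise_append, List.mem_append]
  constructor
  · rintro ⟨⟨h₁, h₂, h₁₂⟩, hpos⟩
    exact ⟨⟨h₁, fun x hx => hpos x (.inl hx)⟩, ⟨h₂, fun x hx => hpos x (.inr hx)⟩, h₁₂⟩
  · rintro ⟨⟨h₁, hpos₁⟩, ⟨h₂, hpos₂⟩, h₁₂⟩
    exact ⟨⟨h₁, h₂, h₁₂⟩, fun x hx => hx.elim (hpos₁ x) (hpos₂ x)⟩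

lemma isPtn_cons {a : ℕ} : IsPtn (a :: l) ↔ 0 < a ∧ (∀ b ∈ l, b ≤ a) ∧ IsPtn l := by
  simp only [IsPtn, List.pairwise_cons, List.mem_cons, forall_eq_or_imp]
  tauto

lemma isPtn_singleton {a : ℕ} : IsPtn [a] ↔ 0 < a := by
  simp [isPtn_cons, isPtn_nil]

lemma IsPtn.getElem_le (h : IsPtn l) {i j : ℕ} (hij : i ≤ j) (hj : j < l.length) :
    l[j] ≤ l[i] := by
  rcases hij.eq_or_lt with rfl | hlt
  · rfl
  · exact List.pairwise_iff_getElem.1 h.1 i j _ _ hlt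

lemma kpart_eq_getLast (hl : l ≠ []) : Kpart l = l.getLast hl := by
  rw [Kpart, List.getD_eq_getElem _ _ (by simpa [Nat.pos_iff_ne_zero] using hl),
    List.getLast_eq_getElem]

lemma kpart_mem (hl : l ≠ []) : Kpart l ∈ l := by
  rw [kpart_eq_getLast hl]
  exact List.getLast_mem hl

lemma IsPtn.kpart_le (h : IsPtn l) {x : ℕ} (hx : x ∈ l) : Kpart l ≤ x := by
  obtain ⟨i, hi, rfl⟩ := List.mem_iff_getElem.1 hx
  rw [Kpart, List.getD_eq_getElem _ _ (by omega)]
  exact h.getElem_le (by omega) _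

lemma ikpart_mem {k : ℕ} (hk : 1 ≤ k) (hkl : k ≤ l.length) : Ikpart l k ∈ l := by
  rw [Ikpart, List.getD_eq_getElem _ _ (by omega)]
  exact List.getElem_mem _

end Partitions

lemma qPoch_succ (n : ℕ) : qPoch (n + 1) = qPoch n * (1 - X ^ (n + 1)) :=
  prod_range_succ _ _

section SmallestPart

def partsGe (a : ℕ) : Set (List ℕ) := {l | IsPtn l ∧ ∀ x ∈ l, a ≤ x}

def minPartEq (a : ℕ) : Set (List ℕ) := {l | IsPtn l ∧ l ≠ [] ∧ Kpart l = a}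

lemma bijOn_append_singleton {a : ℕ} (ha : 1 ≤ a) :
    Set.BijOn (· ++ [a]) (partsGe a) (minPartEq a) := by
  refine ⟨fun l ⟨hl, hge⟩ => ⟨?_, by simp, ?_⟩, (List.append_left_injective [a]).injOn,
    fun y ⟨hy, hne, hK⟩ => ⟨y.dropLast, ⟨hy.sublist (List.dropLast_sublist y), ?_⟩, ?_⟩⟩
  · exact isPtn_append.2 ⟨hl, isPtn_singleton.2 ha, fun x hx b hb => by simp_all⟩
  · simp [kpart_eq_getLast]
  · exact fun x hx => hK ▸ hy.kpart_le (List.dropLast_subset y hx)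
  · rw [← hK, kpart_eq_getLast hne]
    exact List.dropLast_append_getLast hne

lemma sizeSeries_minPartEq {a : ℕ} (ha : 1 ≤ a) :
    sizeSeries List.sum (minPartEq a) = X ^ a * sizeSeries List.sum (partsGe a) :=
  sizeSeries_eq_X_pow_mul_of_bijOn a _ (bijOn_append_singleton ha) fun l _ => by simp

lemma partsGe_eq_union (a : ℕ) : partsGe a = partsGe (a + 1) ∪ minPartEq a := by
  ext l
  simp only [partsGe, minPartEq, Set.mem_ofPred_eq, Set.mem_union]
  constructor
  · rintro ⟨hl, hge⟩
    rcases eq_or_ne l [] with rfl | hne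
    · exact .inl ⟨hl, by simp⟩
    rcases (hge _ (kpart_mem hne)).eq_or_lt with heq | hlt
    · exact .inr ⟨hl, hne, heq.symm⟩
    · exact .inl ⟨hl, fun x hx => hlt.trans_le (hl.kpart_le hx)⟩
  · rintro (⟨hl, hge⟩ | ⟨hl, -, rfl⟩)
    · exact ⟨hl, fun x hx => Nat.le_of_succ_le (hge x hx)⟩
    · exact ⟨hl, fun x hx => hl.kpart_le hx⟩

lemma disjoint_partsGe_succ_minPartEq (a : ℕ) : Disjoint (partsGe (a + 1)) (minPartEq a) :=
  Set.disjoint_left.2 fun _ ⟨_, hge⟩ ⟨_, hne, hK⟩ => by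
    have := hge _ (kpart_mem hne)
    omega

lemma sizeSeries_partsGe_succ (a : ℕ) :
    sizeSeries List.sum (partsGe (a + 1)) = qPoch a * Hq := by
  induction a with
  | zero =>
    have hone : partsGe 1 = {l | IsPtn l} := by
      ext l
      exact ⟨fun h => h.1, fun h => ⟨h, h.2⟩⟩
    simp only [hone, qPoch, range_zero, prod_empty, one_mul]
    rfl
  | succ a ih =>
    have hsplit := partsGe_eq_union (a + 1) ▸ sizeSeries_union
      (disjoint_partsGe_succ_minPartEq (a + 1)) (finiteSlices_of_isPtn fun _ h => h.1)
      (finiteSlices_of_isPtn fun _ h => h.1)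
    rw [sizeSeries_minPartEq (Nat.le_add_left 1 a), ih] at hsplit
    rw [qPoch_succ]
    linear_combination -hsplit

end SmallestPart

section Box

def inBox (m c : ℕ) : Set (List ℕ) := {l | IsPtn l ∧ l.length ≤ m ∧ ∀ x ∈ l, x ≤ c}

lemma inBox_zero_left (c : ℕ) : inBox 0 c = {[]} := by
  ext l
  simp only [inBox, Set.mem_ofPred_eq, Set.mem_singleton_iff, Nat.le_zero, List.length_eq_zero_iff]
  exact ⟨fun h => h.2.1, by rintro rfl; exact ⟨isPtn_nil, rfl, by simp⟩⟩

lemma inBox_zero_right (m : ℕ) : inBox m 0 = {[]} := by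
  ext l
  simp only [inBox, Set.mem_ofPred_eq, Set.mem_singleton_iff]
  refine ⟨fun ⟨hl, _, hle⟩ => List.eq_nil_iff_forall_not_mem.2 fun x hx => ?_,
    fun h => h ▸ ⟨isPtn_nil, by simp, by simp⟩⟩
  have := hl.2 x hx
  have := hle x hx
  omega

lemma inBox_succ_succ (m c : ℕ) :
    inBox (m + 1) (c + 1) = inBox (m + 1) c ∪ {l ∈ inBox (m + 1) (c + 1) | c + 1 ∈ l} := by
  ext l
  simp only [inBox, Set.mem_ofPred_eq, Set.mem_union]
  constructor
  · rintro ⟨hl, hlen, hle⟩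
    by_cases hc : c + 1 ∈ l
    · exact .inr ⟨⟨hl, hlen, hle⟩, hc⟩
    · refine .inl ⟨hl, hlen, fun x hx => ?_⟩
      have := hle x hx
      have : x ≠ c + 1 := fun h => hc (h ▸ hx)
      omega
  · rintro (⟨hl, hlen, hle⟩ | ⟨h, -⟩)
    · exact ⟨hl, hlen, fun x hx => (hle x hx).trans (Nat.le_succ c)⟩
    · exact h

lemma disjoint_inBox_succ (m c : ℕ) :
    Disjoint (inBox (m + 1) c) {l ∈ inBox (m + 1) (c + 1) | c + 1 ∈ l} :=
  Set.disjoint_left.2 fun _ ⟨_, _, hle⟩ ⟨_, hc⟩ => by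
    have := hle _ hc
    omega

lemma bijOn_cons_inBox (m c : ℕ) :
    Set.BijOn ((c + 1) :: ·) (inBox m (c + 1)) {l ∈ inBox (m + 1) (c + 1) | c + 1 ∈ l} := by
  refine ⟨fun l ⟨hl, hlen, hle⟩ => ⟨⟨?_, by simpa using hlen, ?_⟩, List.mem_cons_self⟩,
    List.cons_injective.injOn, ?_⟩
  · exact isPtn_cons.2 ⟨c.succ_pos, hle, hl⟩
  · simpa using hle
  · rintro y ⟨⟨hy, hlen, hle⟩, hc⟩
    obtain ⟨a, t, rfl⟩ := List.exists_cons_of_ne_nil (List.ne_nil_of_mem hc)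
    obtain ⟨-, hta, ht⟩ := isPtn_cons.1 hy
    have ha : a = c + 1 := by
      have := hle a List.mem_cons_self
      rcases List.mem_cons.1 hc with h | h
      · omega
      · have := hta _ h
        omega
    subst ha
    exact ⟨t, ⟨ht, by simpa using hlen, fun x hx => hle x (List.mem_cons_of_mem _ hx)⟩, rfl⟩

lemma sizeSeries_inBox_succ_succ (m c : ℕ) :
    sizeSeries List.sum (inBox (m + 1) (c + 1)) =
      sizeSeries List.sum (inBox (m + 1) c) +
        X ^ (c + 1) * sizeSeries List.sum (inBox m (c + 1)) := by
  rw [inBox_succ_succ, sizeSeries_union (disjoint_inBox_succ m c)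
      (finiteSlices_of_isPtn fun _ h => h.1) (finiteSlices_of_isPtn fun _ h => h.1.1),
    sizeSeries_eq_X_pow_mul_of_bijOn (sa := List.sum) (c + 1) _ (bijOn_cons_inBox m c)
      fun l _ => by simp [add_comm]]

theorem qPoch_mul_qPoch_mul_sizeSeries_inBox (m c : ℕ) :
    qPoch m * qPoch c * sizeSeries List.sum (inBox m c) = qPoch (m + c) := by
  induction m generalizing c with
  | zero => simp [inBox_zero_left, sizeSeries_singleton, qPoch]
  | succ m ihm =>
    induction c with
    | zero => simp [inBox_zero_right, sizeSeries_singleton, qPoch]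
    | succ c ihc =>
      calc qPoch (m + 1) * qPoch (c + 1) * sizeSeries List.sum (inBox (m + 1) (c + 1))
          = (1 - X ^ (c + 1)) * (qPoch (m + 1) * qPoch c * sizeSeries List.sum (inBox (m + 1) c))
            + X ^ (c + 1) * (1 - X ^ (m + 1))
              * (qPoch m * qPoch (c + 1) * sizeSeries List.sum (inBox m (c + 1))) := by
            rw [sizeSeries_inBox_succ_succ, qPoch_succ c, qPoch_succ m]
            ring
        _ = qPoch (m + c + 1) * (1 - X ^ (m + c + 1 + 1)) := by
            rw [ihc, ihm (c + 1), show m + 1 + c = m + c + 1 by ring,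
              show m + (c + 1) = m + c + 1 by ring]
            ring
        _ = qPoch (m + 1 + (c + 1)) := by
            rw [show m + 1 + (c + 1) = m + c + 1 + 1 by ring, qPoch_succ (m + c + 1)]

end Box

section Rows

def inBoxOfLength (m c : ℕ) : Set (List ℕ) := {l | IsPtn l ∧ l.length = m ∧ ∀ x ∈ l, x ≤ c}

def padOnes (m : ℕ) (μ : List ℕ) : List ℕ := μ.map (· + 1) ++ List.replicate (m - μ.length) 1

def unpadOnes (l : List ℕ) : List ℕ := (l.filter (1 < ·)).map (· - 1)

variable {m c : ℕ}

lemma unpadOnes_padOnes {μ : List ℕ} (hμ : ∀ x ∈ μ, 0 < x) : unpadOnes (padOnes m μ) = μ := by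
  have hfilter : (μ.map (· + 1)).filter (1 < ·) = μ.map (· + 1) :=
    List.filter_eq_self.2 fun x hx => by
      obtain ⟨u, hu, rfl⟩ := List.mem_map.1 hx
      simpa using hμ u hu
  simp [unpadOnes, padOnes, List.filter_append, hfilter, Function.comp_def]

lemma sum_padOnes {μ : List ℕ} (hlen : μ.length ≤ m) : (padOnes m μ).sum = μ.sum + m := by
  simp only [padOnes, List.sum_append, List.sum_map_add, List.map_id', List.map_const',
    List.sum_replicate, smul_eq_mul, mul_one]
  omega

lemma padOnes_mem_inBoxOfLength {μ : List ℕ} (hμ : μ ∈ inBox m c) :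
    padOnes m μ ∈ inBoxOfLength m (c + 1) := by
  obtain ⟨⟨hsorted, hpos⟩, hlen, hle⟩ := hμ
  refine ⟨isPtn_append.2 ⟨⟨hsorted.map _ fun a b h => by omega, by simp⟩, ⟨?_, ?_⟩, ?_⟩,
    by simp [padOnes]; omega, ?_⟩
  · exact List.pairwise_replicate.2 (.inr le_rfl)
  · simp [List.mem_replicate]
  · simp only [List.mem_map, List.mem_replicate]
    rintro _ ⟨u, hu, rfl⟩ b ⟨-, rfl⟩
    have := hpos u hu
    omega
  · simp only [padOnes, List.mem_append, List.mem_map, List.mem_replicate]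
    rintro _ (⟨u, hu, rfl⟩ | ⟨-, rfl⟩)
    · exact Nat.succ_le_succ (hle u hu)
    · omega

lemma unpadOnes_mem_inBox {y : List ℕ} (hy : y ∈ inBoxOfLength m (c + 1)) :
    unpadOnes y ∈ inBox m c := by
  obtain ⟨⟨hsorted, -⟩, hlen, hle⟩ := hy
  refine ⟨⟨(hsorted.sublist List.filter_sublist).map _ fun a b h => by omega, ?_⟩, ?_, ?_⟩
  · simp only [unpadOnes, List.mem_map, List.mem_filter, decide_eq_true_eq]
    rintro _ ⟨u, ⟨-, hu⟩, rfl⟩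
    omega
  · simpa [unpadOnes, ← hlen] using List.length_filter_le _ _
  · simp only [unpadOnes, List.mem_map, List.mem_filter, decide_eq_true_eq]
    rintro _ ⟨u, ⟨hu, -⟩, rfl⟩
    have := hle u hu
    omega

/-- `padOnes` rebuilds `y` up to order (the parts `> 1` followed by the ones), and both lists are
sorted. -/
lemma padOnes_unpadOnes {y : List ℕ} (hy : y ∈ inBoxOfLength m (c + 1)) :
    padOnes m (unpadOnes y) = y := by
  have hperm := List.filter_append_perm (1 < ·) y
  have hbig : (unpadOnes y).map (· + 1) = y.filter (1 < ·) := by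
    rw [unpadOnes, List.map_map]
    refine (List.map_congr_left fun x hx => ?_).trans (List.map_id _)
    have := (List.mem_filter.1 hx).2
    simp only [decide_eq_true_eq] at this
    simp only [Function.comp_apply, id_eq]
    omega
  have hones : List.replicate (m - (unpadOnes y).length) 1 = y.filter fun x => !decide (1 < x) := by
    refine (List.eq_replicate_iff.2 ⟨?_, fun b hb => ?_⟩).symm
    · have := hperm.length_eq
      rw [List.length_append, hy.2.1] at this
      rw [unpadOnes, List.length_map]
      omega
    · obtain ⟨hb, hb1⟩ := List.mem_filter.1 hb
      have := hy.1.2 b hb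
      simp only [Bool.not_eq_eq_eq_not, Bool.not_true, decide_eq_false_iff_not] at hb1
      omega
  have hpad : (padOnes m (unpadOnes y)).Perm y := by
    rw [padOnes, hbig, hones]
    exact hperm
  exact hpad.eq_of_pairwise' (padOnes_mem_inBoxOfLength (unpadOnes_mem_inBox hy)).1.1 hy.1.1

lemma bijOn_padOnes : Set.BijOn (padOnes m) (inBox m c) (inBoxOfLength m (c + 1)) :=
  ⟨fun _ hμ => padOnes_mem_inBoxOfLength hμ,
    Set.LeftInvOn.injOn fun _ hμ => unpadOnes_padOnes hμ.1.2,
    fun _ hy => ⟨unpadOnes _, unpadOnes_mem_inBox hy, padOnes_unpadOnes hy⟩⟩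

lemma sizeSeries_inBoxOfLength :
    sizeSeries List.sum (inBoxOfLength m (c + 1)) = X ^ m * sizeSeries List.sum (inBox m c) :=
  sizeSeries_eq_X_pow_mul_of_bijOn m _ bijOn_padOnes fun _ hμ => sum_padOnes hμ.2.1

end Rows

section KthSmallestPart

def kthSmallestEq (k c : ℕ) : Set (List ℕ) := {l | IsPtn l ∧ k ≤ l.length ∧ Ikpart l k = c}

lemma ikpart_append_cons (ρ σ : List ℕ) (c : ℕ) : Ikpart (ρ ++ c :: σ) (σ.length + 1) = c := by
  simp [Ikpart, show ρ.length + (σ.length + 1) - (σ.length + 1) = ρ.length by omega]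

lemma bijOn_append_cons (a c : ℕ) :
    Set.BijOn (fun p : List ℕ × List ℕ => p.1 ++ (c + 1) :: p.2)
      (partsGe (c + 1) ×ˢ inBoxOfLength a (c + 1)) (kthSmallestEq (a + 1) (c + 1)) := by
  refine ⟨?_, ?_, ?_⟩
  · rintro ⟨ρ, σ⟩ ⟨⟨hρ, hge⟩, hσ, hlen, hle⟩
    refine ⟨isPtn_append.2 ⟨hρ, isPtn_cons.2 ⟨c.succ_pos, hle, hσ⟩, ?_⟩, by simp [hlen], ?_⟩
    · intro x hx b hb
      rcases List.mem_cons.1 hb with rfl | hb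
      · exact hge x hx
      · exact (hle b hb).trans (hge x hx)
    · rw [← hlen]
      exact ikpart_append_cons ρ σ (c + 1)
  · rintro ⟨ρ₁, σ₁⟩ ⟨-, -, hlen₁, -⟩ ⟨ρ₂, σ₂⟩ ⟨-, -, hlen₂, -⟩ h
    obtain ⟨hρ, hσ⟩ := List.append_inj' h (by simp [hlen₁, hlen₂])
    simp_all
  · rintro y ⟨hy, hlen, hk⟩
    set i := y.length - (a + 1)
    have hyi : y[i] = c + 1 := by
      rw [← hk, Ikpart, List.getD_eq_getElem]
    have hsplit : y.take i ++ (c + 1) :: y.drop (i + 1) = y := by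
      rw [← hyi, List.getElem_cons_drop, List.take_append_drop]
    have hy' := hsplit ▸ hy
    obtain ⟨hρ, hσ', hρσ⟩ := isPtn_append.1 hy'
    obtain ⟨-, hσle, hσ⟩ := isPtn_cons.1 hσ'
    refine ⟨(y.take i, y.drop (i + 1)),
      ⟨⟨hρ, fun x hx => hρσ x hx _ List.mem_cons_self⟩, hσ, by simp; omega, hσle⟩, hsplit⟩

lemma sizeSeries_kthSmallestEq (a b : ℕ) :
    sizeSeries List.sum (kthSmallestEq (a + 1) (b + 1)) =
      X ^ (b + 1) * X ^ a * qPoch b * Hq * sizeSeries List.sum (inBox a b) := by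
  rw [sizeSeries_eq_X_pow_mul_of_bijOn (sa := fun p => p.1.sum + p.2.sum) (b + 1) _
      (bijOn_append_cons a b) fun p _ => by
      simp only [List.sum_append, List.sum_cons]; ring,
    sizeSeries_prod (finiteSlices_of_isPtn fun _ h => h.1) (finiteSlices_of_isPtn fun _ h => h.1),
    sizeSeries_partsGe_succ, sizeSeries_inBoxOfLength]
  ring

end KthSmallestPart

section BlackRedPairs

def blackRedPairs (j : ℕ) : Set (List ℕ × List ℕ) :=
  {p | IsPtn p.1 ∧ IsPtn p.2 ∧ p.1 ≠ [] ∧ p.2 ≠ [] ∧ Kpart p.1 ≤ p.2.length ∧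
    Kpart p.1 + Ikpart p.2 (Kpart p.1) = j}

lemma blackRedPairs_eq_biUnion (n : ℕ) :
    blackRedPairs (n + 2) =
      ⋃ ab ∈ antidiagonal n, minPartEq (ab.1 + 1) ×ˢ kthSmallestEq (ab.1 + 1) (ab.2 + 1) := by
  ext ⟨b, rd⟩
  simp only [blackRedPairs, minPartEq, kthSmallestEq, Set.mem_ofPred_eq, Set.mem_iUnion,
    Set.mem_prod, HasAntidiagonal.mem_antidiagonal, exists_prop]
  constructor
  · rintro ⟨hb, hrd, hbne, -, hk, hsum⟩
    have hkpos := hb.2 _ (kpart_mem hbne)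
    have hikpos := hrd.2 _ (ikpart_mem hkpos hk)
    refine ⟨(Kpart b - 1, Ikpart rd (Kpart b) - 1), by dsimp only; omega, ⟨hb, hbne, by omega⟩,
      hrd, ?_⟩
    rw [Nat.sub_add_cancel hkpos]
    exact ⟨hk, by omega⟩
  · rintro ⟨⟨a, c⟩, hac, ⟨hb, hbne, hK⟩, hrd, hlen, hIk⟩
    refine ⟨hb, hrd, hbne, List.ne_nil_of_length_pos (by omega), hK ▸ hlen, ?_⟩
    rw [hK, hIk]
    omega

lemma sizeSeries_minPartEq_prod_kthSmallestEq (a b : ℕ) :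
    sizeSeries (fun p : List ℕ × List ℕ => p.1.sum + p.2.sum)
        (minPartEq (a + 1) ×ˢ kthSmallestEq (a + 1) (b + 1)) =
      X ^ (a + b + 2) * Hq ^ 2 * qPoch (a + b) * X ^ a := by
  rw [sizeSeries_prod (finiteSlices_of_isPtn fun _ h => h.1) (finiteSlices_of_isPtn fun _ h => h.1),
    sizeSeries_minPartEq (Nat.le_add_left 1 a), sizeSeries_partsGe_succ, sizeSeries_kthSmallestEq]
  linear_combination (X ^ (a + b + 2) * Hq ^ 2 * X ^ a) * qPoch_mul_qPoch_mul_sizeSeries_inBox a b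

lemma sizeSeries_blackRedPairs_mul (n : ℕ) :
    sizeSeries (fun p : List ℕ × List ℕ => p.1.sum + p.2.sum) (blackRedPairs (n + 2)) * (1 - X) =
      X ^ (n + 2) * Hq ^ 2 * qPoch (n + 1) := by
  have hdisj : ((antidiagonal n : Finset (ℕ × ℕ)) : Set (ℕ × ℕ)).PairwiseDisjoint
      fun ab => minPartEq (ab.1 + 1) ×ˢ kthSmallestEq (ab.1 + 1) (ab.2 + 1) := by
    intro ab hab cd hcd hne
    refine Set.disjoint_left.2 fun p ⟨⟨_, _, h₁⟩, _⟩ ⟨⟨_, _, h₂⟩, _⟩ => hne ?_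
    have hab := HasAntidiagonal.mem_antidiagonal.1 hab
    have hcd := HasAntidiagonal.mem_antidiagonal.1 hcd
    exact Prod.ext (by omega) (by omega)
  have hterm : ∀ ab ∈ antidiagonal n,
      sizeSeries (fun p : List ℕ × List ℕ => p.1.sum + p.2.sum)
        (minPartEq (ab.1 + 1) ×ˢ kthSmallestEq (ab.1 + 1) (ab.2 + 1)) =
      X ^ (n + 2) * Hq ^ 2 * qPoch n * X ^ ab.1 := fun ab hab => by
    rw [sizeSeries_minPartEq_prod_kthSmallestEq, HasAntidiagonal.mem_antidiagonal.1 hab]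
  rw [blackRedPairs_eq_biUnion, sizeSeries_biUnion (fun _ _ => (finiteSlices_of_isPtn
      fun _ h => h.1).prod (finiteSlices_of_isPtn fun _ h => h.1)) hdisj, sum_congr rfl hterm,
    ← mul_sum]
  simp only [Nat.sum_antidiagonal_eq_sum_range_succ_mk, Nat.succ_eq_add_one]
  rw [mul_assoc, geom_sum_mul_neg, qPoch_succ]
  ring

lemma sizeSeries_blackRedPairs (n : ℕ) :
    sizeSeries (fun p : List ℕ × List ℕ => p.1.sum + p.2.sum) (blackRedPairs (n + 2)) =
      Hq ^ 2 * (qPoch 1)⁻¹ * (X ^ (n + 2) * qPoch (n + 1)) := by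
  have hq1 : qPoch 1 = 1 - X := by simp [qPoch]
  rw [mul_right_comm, hq1, eq_mul_inv_iff_mul_eq (by simp), sizeSeries_blackRedPairs_mul]
  ring

end BlackRedPairs

section Assembly

def gordonSet (r ℓ : ℕ) : Set (List ℕ) := {l | MemB r r l ∧ l.length - l.count 1 ≤ ℓ}

lemma mk_gcount_eq_sizeSeries (r ℓ : ℕ) :
    PowerSeries.mk (fun n => (Gcount r ℓ n : ℚ)) = sizeSeries List.sum (gordonSet r ℓ) := by
  ext n
  rw [coeff_mk, coeff_sizeSeries, Gcount]
  congr 3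
  ext l
  simp only [gordonSet, Set.mem_ofPred_eq]
  tauto

lemma cseries_eq_sizeSeries (P : List ℕ → List ℕ → List ℕ → Prop) :
    cseries P = sizeSeries (fun t : List ℕ × List ℕ × List ℕ => t.1.sum + t.2.1.sum + t.2.2.sum)
      {t | P t.1 t.2.1 t.2.2} :=
  rfl

lemma finiteSlices_triples {A : Set (List ℕ × List ℕ × List ℕ)}
    (hA : ∀ t ∈ A, IsPtn t.1 ∧ IsPtn t.2.1 ∧ IsPtn t.2.2) :
    FiniteSlices (fun t : List ℕ × List ℕ × List ℕ => t.1.sum + t.2.1.sum + t.2.2.sum) A :=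
  fun n => (finiteSlices_isPtn.prod (finiteSlices_isPtn.prod finiteSlices_isPtn) n).subset
    fun t ⟨ht, hs⟩ => ⟨hA t ht, (add_assoc _ _ _).symm.trans hs⟩

def coloredTriples (r ℓ : ℕ) : Set (List ℕ × List ℕ × List ℕ) :=
  {t | (t.1, t.2.1) ∈ blackRedPairs (r + ℓ) ∧ t.2.2 ∈ gordonSet r ℓ}

lemma setOf_type4b_union_setOf_type3b (r : ℕ) :
    {t : List ℕ × List ℕ × List ℕ | Type4b r t.1 t.2.1 t.2.2} ∪
        {t | Type3b r t.1 t.2.1 t.2.2} = ⋃ ℓ, coloredTriples r ℓ := by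
  ext ⟨b, rd, g⟩
  simp only [Type4b, Type3b, coloredTriples, blackRedPairs, gordonSet, Set.mem_union,
    Set.mem_ofPred_eq, Set.mem_iUnion]
  constructor
  · rintro (⟨hb, hrd, -, hbne, hrdne, -, hg, hk, hr, hlen⟩ | ⟨hb, hrd, -, hbne, hrdne, rfl, hk, hr⟩)
    · exact ⟨Kpart b + Ikpart rd (Kpart b) - r, ⟨hb, hrd, hbne, hrdne, hk, by omega⟩, hg, by omega⟩
    · exact ⟨Kpart b + Ikpart rd (Kpart b) - r, ⟨hb, hrd, hbne, hrdne, hk, by omega⟩,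
        ⟨isPtn_nil, fun _ h => by simp at h, by simp⟩, by simp⟩
  · rintro ⟨ℓ, ⟨hb, hrd, hbne, hrdne, hk, hsum⟩, hg, hlen⟩
    rcases eq_or_ne g [] with rfl | hgne
    · exact .inr ⟨hb, hrd, isPtn_nil, hbne, hrdne, rfl, hk, by omega⟩
    · exact .inl ⟨hb, hrd, hg.1, hbne, hrdne, hgne, hg, hk, by omega, by omega⟩

lemma sizeSeries_coloredTriples (r ℓ : ℕ) :
    sizeSeries (fun t : List ℕ × List ℕ × List ℕ => t.1.sum + t.2.1.sum + t.2.2.sum)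
        (coloredTriples r ℓ) =
      sizeSeries (fun p : List ℕ × List ℕ => p.1.sum + p.2.sum) (blackRedPairs (r + ℓ)) *
        sizeSeries List.sum (gordonSet r ℓ) := by
  have hbij : Set.BijOn (Equiv.prodAssoc _ _ _) (blackRedPairs (r + ℓ) ×ˢ gordonSet r ℓ)
      (coloredTriples r ℓ) :=
    ⟨fun _ h => h, (Equiv.injective _).injOn, fun t ht => ⟨((t.1, t.2.1), t.2.2), ht, rfl⟩⟩
  rw [sizeSeries_eq_X_pow_mul_of_bijOn
      (sa := fun p : (List ℕ × List ℕ) × List ℕ => p.1.1.sum + p.1.2.sum + p.2.sum) 0 _ hbij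
      fun _ _ => rfl, pow_zero, one_mul]
  exact sizeSeries_prod (sa := fun q : List ℕ × List ℕ => q.1.sum + q.2.sum) (sb := List.sum)
    ((finiteSlices_isPtn.prod finiteSlices_isPtn).subset fun _ h => ⟨h.1, h.2.1⟩)
    (finiteSlices_of_isPtn fun _ h => h.1.1)

lemma cseries_type4b_add_cseries_type3b (r : ℕ) :
    cseries (Type4b r) + cseries (Type3b r) = seriesSum fun ℓ =>
      sizeSeries (fun p : List ℕ × List ℕ => p.1.sum + p.2.sum) (blackRedPairs (r + ℓ)) *
        sizeSeries List.sum (gordonSet r ℓ) := by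
  have hdisj : Pairwise (Disjoint on coloredTriples r) := fun ℓ ℓ' hne =>
    Set.disjoint_left.2 fun _ ⟨⟨_, _, _, _, _, h⟩, _⟩ ⟨⟨_, _, _, _, _, h'⟩, _⟩ => hne (by omega)
  have hsize : ∀ ℓ, ∀ t ∈ coloredTriples r ℓ, ℓ ≤ t.1.sum + t.2.1.sum + t.2.2.sum :=
    fun ℓ _ ⟨⟨hb, _, hbne, _, hk, h⟩, _⟩ => by
      dsimp only at hb hbne hk h
      have := List.le_sum_of_mem (kpart_mem hbne)
      have := List.le_sum_of_mem (ikpart_mem (hb.2 _ (kpart_mem hbne)) hk)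
      omega
  have hdisjTypes : Disjoint {t : List ℕ × List ℕ × List ℕ | Type4b r t.1 t.2.1 t.2.2}
      {t | Type3b r t.1 t.2.1 t.2.2} :=
    Set.disjoint_left.2 fun _ h₄ h₃ => h₄.2.2.2.2.2.1 h₃.2.2.2.2.2.1
  rw [cseries_eq_sizeSeries, cseries_eq_sizeSeries, ← sizeSeries_union hdisjTypes
      (finiteSlices_triples fun _ h => ⟨h.1, h.2.1, h.2.2.1⟩)
      (finiteSlices_triples fun _ h => ⟨h.1, h.2.1, h.2.2.1⟩),
    setOf_type4b_union_setOf_type3b, sizeSeries_iUnion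
      (fun _ => finiteSlices_triples fun _ ht => ⟨ht.1.1, ht.1.2.1, ht.2.1.1⟩) hdisj hsize]
  exact congrArg seriesSum (funext (sizeSeries_coloredTriples r))

end Assembly

/-- `S_{4,b} + S_{3,b} = (H²/(q)_1) · Σ_{ℓ≥0} q^{r+ℓ} (q)_{r+ℓ−1} G_{r,ℓ}`. -/
theorem S4b_add_S3b (r : ℕ) (hr : 2 ≤ r) :
    cseries (Type4b r) + cseries (Type3b r)
      = Hq ^ 2 * (qPoch 1)⁻¹ *
          seriesSum (fun ℓ => (X : PowerSeries ℚ) ^ (r + ℓ) * qPoch (r + ℓ - 1) *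
            PowerSeries.mk fun n => (Gcount r ℓ n : ℚ)) := by
  have hdvd : ∀ ℓ, (X : PowerSeries ℚ) ^ ℓ ∣
      X ^ (r + ℓ) * qPoch (r + ℓ - 1) * PowerSeries.mk fun n => (Gcount r ℓ n : ℚ) := fun ℓ =>
    ((pow_dvd_pow X (Nat.le_add_left ℓ r)).mul_right _).mul_right _
  rw [cseries_type4b_add_cseries_type3b, mul_seriesSum _ hdvd]
  refine congrArg seriesSum (funext fun ℓ => ?_)
  obtain ⟨n, hn⟩ : ∃ n, r + ℓ = n + 2 := ⟨r + ℓ - 2, by omega⟩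
  rw [mk_gcount_eq_sizeSeries, show r + ℓ - 1 = n + 1 by omega, hn, sizeSeries_blackRedPairs]
  ring
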